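/- arXiv:1512.04978 — 7 statements merged into one kernel-verified Lean document; each statement's English description precedes it below -/
import Mathlib

section
/- Let G be a group and N a normal subgroup of G, and let g ∈ N lie in the G-conjugacy class C. Suppose C is the disjoint union of N-conjugacy classes C₁, ..., Cₛ, and for each i let xᵢ ∈ G be such that xᵢ g xᵢ⁻¹ ∈ Cᵢ. Then g is real in N (i.e., conjugate to g⁻¹ by an element of N) if and only if xᵢ g xᵢ⁻¹ is real in N for every i. -/
/-!
Reality in `N` is invariant under conjugation by the normalizer of `N`, hence by all of `G` and
in particular by `N` itself. So if `g` is real in `N`, so is every `G`-conjugate of it.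
Conversely, `g` lies in some `N`-class `C i`, which also contains `x i * g * (x i)⁻¹`, so the two
are `N`-conjugate and realness transfers back.
-/

namespace Subgroup

variable {G : Type*} [Group G]

def IsRealIn (N : Subgroup G) (g : G) : Prop :=
  ∃ h ∈ N, h * g * h⁻¹ = g⁻¹

variable {N : Subgroup G} {g k : G}

theorem IsRealIn.conj (hg : N.IsRealIn g) (hk : k ∈ normalizer (N : Set G)) :
    N.IsRealIn (k * g * k⁻¹) := by
  obtain ⟨h, hN, hh⟩ := hg
  refine ⟨k * h * k⁻¹, (mem_normalizer_iff.mp hk h).mp hN, ?_⟩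
  calc k * h * k⁻¹ * (k * g * k⁻¹) * (k * h * k⁻¹)⁻¹ = k * (h * g * h⁻¹) * k⁻¹ := by group
    _ = (k * g * k⁻¹)⁻¹ := by rw [hh]; group

theorem isRealIn_conj_iff (hk : k ∈ normalizer (N : Set G)) :
    N.IsRealIn (k * g * k⁻¹) ↔ N.IsRealIn g := by
  refine ⟨fun hg => ?_, fun hg => hg.conj hk⟩
  simpa [mul_assoc] using hg.conj (inv_mem hk)

end Subgroup

open Subgroup

theorem stmt_0_general {G : Type*} [Group G] (N : Subgroup G) [N.Normal] (g : G)
    (s : ℕ) (C : Fin s → Set G)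
    (hclass : ∀ i, ∃ y, y ∈ C i ∧ C i = {z | ∃ n ∈ N, z = n * y * n⁻¹})
    (hunion : {z : G | ∃ x : G, z = x * g * x⁻¹} = ⋃ i, C i)
    (x : Fin s → G) (hx : ∀ i, x i * g * (x i)⁻¹ ∈ C i) :
    (∃ h ∈ N, h * g * h⁻¹ = g⁻¹) ↔
      ∀ i, ∃ h ∈ N, h * (x i * g * (x i)⁻¹) * h⁻¹ = (x i * g * (x i)⁻¹)⁻¹ := by
  change N.IsRealIn g ↔ ∀ i, N.IsRealIn (x i * g * (x i)⁻¹)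
  have hnorm : ∀ k : G, k ∈ normalizer (N : Set G) := by simp [normalizer_eq_top]
  refine ⟨fun hg i => hg.conj (hnorm _), fun hall => ?_⟩
  obtain ⟨i, hgi⟩ : ∃ i, g ∈ C i := Set.mem_iUnion.mp (hunion ▸ ⟨1, by group⟩)
  obtain ⟨y, -, hCy⟩ := hclass i
  have hxi := hx i
  rw [hCy] at hgi hxi
  obtain ⟨a, ha, rfl⟩ := hgi
  obtain ⟨b, hb, hxb⟩ := hxi
  have hyreal : N.IsRealIn y := (isRealIn_conj_iff (le_normalizer hb)).mp (hxb ▸ hall i)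
  exact hyreal.conj (le_normalizer ha)

/-- Lemma 3.1 (Gill–Singh style): if the `G`-class of `g ∈ N` splits into the
`N`-classes `C i`, with `x i * g * (x i)⁻¹ ∈ C i`, then `g` is real in `N` iff each
`x i * g * (x i)⁻¹` is real in `N`. -/
theorem stmt_0 {G : Type*} [Group G] (N : Subgroup G) [N.Normal] (g : G) (hg : g ∈ N)
    (s : ℕ) (C : Fin s → Set G)
    (hclass : ∀ i, ∃ y, y ∈ C i ∧ C i = {z | ∃ n ∈ N, z = n * y * n⁻¹})
    (hunion : {z : G | ∃ x : G, z = x * g * x⁻¹} = ⋃ i, C i)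
    (hdisj : ∀ i j, i ≠ j → Disjoint (C i) (C j))
    (x : Fin s → G) (hx : ∀ i, x i * g * (x i)⁻¹ ∈ C i) :
    (∃ h ∈ N, h * g * h⁻¹ = g⁻¹) ↔
      ∀ i, ∃ h ∈ N, h * (x i * g * (x i)⁻¹) * h⁻¹ = (x i * g * (x i)⁻¹)⁻¹ :=
  stmt_0_general N g s C hclass hunion x hx
end

section
/- Let G be a group and N a normal subgroup of finite odd index. If g ∈ N is real in G, then g is real in N. -/
/-! If `h` inverts `g` by conjugation then `h ^ 2` centralizes `g`, so every odd power of `h`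
inverts `g`; take the odd power `h ^ N.index`, which lies in `N`. -/

theorem commute_sq_of_conj_eq_inv {G : Type*} [Group G] {g h : G} (hh : h * g * h⁻¹ = g⁻¹) :
    Commute (h ^ 2) g := by
  have hinv : h * g⁻¹ * h⁻¹ = g := by
    simpa [mul_assoc] using congrArg Inv.inv hh
  calc h ^ 2 * g = h * (h * g * h⁻¹) * h⁻¹ * h ^ 2 := by simp [sq, mul_assoc]
    _ = g * h ^ 2 := by rw [hh, hinv]

theorem conj_pow_of_odd_eq_inv {G : Type*} [Group G] {g h : G} (hh : h * g * h⁻¹ = g⁻¹)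
    {n : ℕ} (hn : Odd n) : h ^ n * g * (h ^ n)⁻¹ = g⁻¹ := by
  obtain ⟨k, rfl⟩ := hn
  have hk : Commute ((h ^ 2) ^ k) g := (commute_sq_of_conj_eq_inv hh).pow_left k
  calc h ^ (2 * k + 1) * g * (h ^ (2 * k + 1))⁻¹
      = (h ^ 2) ^ k * (h * g * h⁻¹) * ((h ^ 2) ^ k)⁻¹ := by
        rw [pow_succ, pow_mul]; group
    _ = g⁻¹ := by rw [hh, hk.inv_right.eq, mul_inv_cancel_right]

theorem stmt_1_general {G : Type*} [Group G] (N : Subgroup G) [N.Normal] (hodd : Odd N.index)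
    (g : G) (hreal : ∃ h : G, h * g * h⁻¹ = g⁻¹) :
    ∃ h ∈ N, h * g * h⁻¹ = g⁻¹ := by
  obtain ⟨h, hh⟩ := hreal
  exact ⟨h ^ N.index, N.pow_index_mem h, conj_pow_of_odd_eq_inv hh hodd⟩

/-- If `N` is a normal subgroup of finite odd index and `g ∈ N` is real in `G`,
then `g` is real in `N`. -/
theorem stmt_1 {G : Type*} [Group G] (N : Subgroup G) [N.Normal] (hodd : Odd N.index)
    (g : G) (hg : g ∈ N) (hreal : ∃ h : G, h * g * h⁻¹ = g⁻¹) :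
    ∃ h ∈ N, h * g * h⁻¹ = g⁻¹ :=
  stmt_1_general N hodd g hreal
end

section
/- Let G be a group, N a normal subgroup, and g ∈ N an element with g² ≠ 1 that is real in G but not real in N. Then the index [R_G(g)·N : C_G(g)·N] equals 2, where R_G(g) = {h ∈ G : h g h⁻¹ = g or h g h⁻¹ = g⁻¹}. In particular, [G : C_G(g)·N] is even. -/
/-!
Conjugation by an element of `R_G(g)` either fixes `g` or inverts it, and any two inverting elements
differ by an element of `C_G(g)`; so `C_G(g)` has at most two cosets in `R_G(g)`, and the same holds
for `C_G(g)N` in `R_G(g)N`. An element `h` inverting `g` lies in `R_G(g)` but not in `C_G(g)N`: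
writing `h = cn` with `c` centralising `g`, the factor `n ∈ N` would invert `g` as well.
-/

namespace Subgroup

variable {G : Type*} [Group G]

theorem relIndex_sup_eq_two {H K N : Subgroup G} [N.Normal] {k : G} (hk : k ∈ K)
    (hkH : k ∉ H ⊔ N) (hK : ∀ r ∈ K, r * k ∈ H ∨ r ∈ H) : (H ⊔ N).relIndex (K ⊔ N) = 2 := by
  refine relIndex_eq_two_iff_exists_notMem_and.mpr ⟨k, mem_sup_left hk, hkH, ?_⟩
  intro b hb
  obtain ⟨r, hr, n, hn, rfl⟩ := mem_sup_of_normal_right.mp hb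
  rcases hK r hr with hrk | hrH
  · left
    have hconj : k⁻¹ * n * k ∈ N := Normal.conj_mem' ‹_› n hn k
    simpa [mul_assoc] using mul_mem_sup hrk hconj
  · exact Or.inr (mul_mem_sup hrH hn)

theorem mem_centralizer_singleton_iff_conj_eq {g k : G} :
    k ∈ centralizer {g} ↔ k * g * k⁻¹ = g := by
  rw [mem_centralizer_singleton_iff, mul_inv_eq_iff_eq_mul]

theorem mul_mem_centralizer_of_conj_eq_inv {g a b : G} (ha : a * g * a⁻¹ = g⁻¹)
    (hb : b * g * b⁻¹ = g⁻¹) : a * b ∈ centralizer {g} := by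
  rw [mem_centralizer_singleton_iff_conj_eq]
  calc a * b * g * (a * b)⁻¹ = a * (b * g * b⁻¹) * a⁻¹ := by group
    _ = (a * g * a⁻¹)⁻¹ := by rw [hb]; group
    _ = g := by rw [ha, inv_inv]

theorem exists_mem_conj_eq_inv_of_mem_centralizer_sup {N : Subgroup G} [N.Normal] {g y : G}
    (hy : y ∈ centralizer {g} ⊔ N) (hyg : y * g * y⁻¹ = g⁻¹) : ∃ n ∈ N, n * g * n⁻¹ = g⁻¹ := by
  obtain ⟨c, hc, n, hn, rfl⟩ := mem_sup_of_normal_right.mp hy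
  refine ⟨n, hn, ?_⟩
  have hc' : c⁻¹ ∈ centralizer {g} := inv_mem hc
  rw [mem_centralizer_singleton_iff_conj_eq] at hc'
  calc n * g * n⁻¹ = c⁻¹ * (c * n * g * (c * n)⁻¹) * c⁻¹⁻¹ := by group
    _ = (c⁻¹ * g * c⁻¹⁻¹)⁻¹ := by rw [hyg]; group
    _ = g⁻¹ := by rw [hc']

end Subgroup

open Subgroup in
theorem stmt_2_general {G : Type*} [Group G] (N : Subgroup G) [N.Normal] (g : G)
    (hrealG : ∃ h : G, h * g * h⁻¹ = g⁻¹)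
    (hnotN : ¬ ∃ h ∈ N, h * g * h⁻¹ = g⁻¹)
    (R : Subgroup G) (hR : ∀ h : G, h ∈ R ↔ (h * g * h⁻¹ = g ∨ h * g * h⁻¹ = g⁻¹)) :
    (Subgroup.centralizer {g} ⊔ N).relIndex (R ⊔ N) = 2 ∧
      Even (Subgroup.centralizer {g} ⊔ N).index := by
  obtain ⟨h, hh⟩ := hrealG
  have hCR : centralizer {g} ≤ R := fun c hc ↦
    (hR c).mpr (Or.inl (mem_centralizer_singleton_iff_conj_eq.mp hc))
  have hrel : (centralizer {g} ⊔ N).relIndex (R ⊔ N) = 2 := by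
    refine relIndex_sup_eq_two ((hR h).mpr (Or.inr hh))
      (fun hhCN ↦ hnotN (exists_mem_conj_eq_inv_of_mem_centralizer_sup hhCN hh)) fun r hr ↦ ?_
    rcases (hR r).mp hr with hrg | hrg
    · exact Or.inr (mem_centralizer_singleton_iff_conj_eq.mpr hrg)
    · exact Or.inl (mul_mem_centralizer_of_conj_eq_inv hrg hh)
  refine ⟨hrel, ?_⟩
  rw [← relIndex_mul_index (sup_le_sup_right hCR N), hrel]
  exact even_two_mul _

/-- If `g ∈ N` with `g² ≠ 1` is real in `G` but not in `N`, then
`[R_G(g)·N : C_G(g)·N] = 2`, so `[G : C_G(g)·N]` is even. -/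
theorem stmt_2 {G : Type*} [Group G] (N : Subgroup G) [N.Normal] (g : G) (hg : g ∈ N)
    (hg2 : g * g ≠ 1)
    (hrealG : ∃ h : G, h * g * h⁻¹ = g⁻¹)
    (hnotN : ¬ ∃ h ∈ N, h * g * h⁻¹ = g⁻¹)
    (R : Subgroup G) (hR : ∀ h : G, h ∈ R ↔ (h * g * h⁻¹ = g ∨ h * g * h⁻¹ = g⁻¹)) :
    (Subgroup.centralizer {g} ⊔ N).relIndex (R ⊔ N) = 2 ∧
      Even (Subgroup.centralizer {g} ⊔ N).index :=
  stmt_2_general N g hrealG hnotN R hR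
end

section
/- Let q be an odd prime power and let g ∈ SU_n(q) (the group of determinant-1 elements of the finite unitary group GU_n(q) ⊆ GL_n(F_{q²})). Then g is real in SU_n(q) if and only if there exists h ∈ GU_n(q) with h g h⁻¹ = g⁻¹ such that det(h) has odd multiplicative order in F_{q²}^×. -/
/-!
If `h ∈ GU_n(q)` inverts `g`, so does every odd power of `h`, since `h²` centralises `g`.
Taking the power `h ^ m` with `m` the (odd) order of `det h` gives an element of `GU_n(q)`
of determinant `(det h) ^ m = 1` that still inverts `g`, i.e. an inverting element of `SU_n(q)`.
The only input from the field is that `x ↦ x ^ q` is a ring endomorphism, so that the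
isometries of the form `η` are closed under products.
-/

open Matrix

theorem conj_pow_eq_inv_of_odd {G : Type*} [Group G] {g h : G} (hg : h * g * h⁻¹ = g⁻¹)
    {m : ℕ} (hm : Odd m) : h ^ m * g * (h ^ m)⁻¹ = g⁻¹ := by
  rw [mul_inv_eq_iff_eq_mul] at hg ⊢
  have hinv : SemiconjBy h g⁻¹ g := by simpa using (show SemiconjBy h g g⁻¹ from hg).inv_right
  have hsq : Commute (h * h) g⁻¹ := SemiconjBy.mul_left hg hinv
  obtain ⟨t, rfl⟩ := hm
  rw [pow_succ, pow_mul, sq]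
  exact SemiconjBy.mul_left (hsq.pow_left t) hg

namespace Matrix.GeneralLinearGroup

variable {n R : Type*} [Fintype n] [DecidableEq n] [CommRing R]

def isometrySubmonoid (σ : R →+* R) (η : Matrix n n R) : Submonoid (GL n R) where
  carrier := {h | ((h : Matrix n n R).map σ)ᵀ * η * h = η}
  one_mem' := by simp
  mul_mem' {a b} ha hb := by
    change _ = η at ha hb
    change (((a * b : GL n R) : Matrix n n R).map σ)ᵀ * η * (a * b : GL n R) = η
    rw [Units.val_mul, Matrix.map_mul, transpose_mul]
    calc (b.val.map σ)ᵀ * (a.val.map σ)ᵀ * η * (a.val * b.val)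
        = (b.val.map σ)ᵀ * ((a.val.map σ)ᵀ * η * a.val) * b.val := by
          simp only [Matrix.mul_assoc]
      _ = η := by rw [ha, hb]

theorem mem_isometrySubmonoid {σ : R →+* R} {η : Matrix n n R} {h : GL n R} :
    h ∈ isometrySubmonoid σ η ↔ ((h : Matrix n n R).map σ)ᵀ * η * h = η :=
  Iff.rfl

end Matrix.GeneralLinearGroup

theorem stmt_3_general (p k q n : ℕ) (hp : p.Prime) (hq : q = p ^ k)
    (F : Type*) [Field F] [Fintype F]
    (hcard : Fintype.card F = q ^ 2)
    (η : Matrix (Fin n) (Fin n) F)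
    (GU : Set (Matrix.GeneralLinearGroup (Fin n) F))
    (hGU : ∀ h : Matrix.GeneralLinearGroup (Fin n) F, h ∈ GU ↔
      ((↑h : Matrix (Fin n) (Fin n) F).map fun x => x ^ q).transpose * η *
        (↑h : Matrix (Fin n) (Fin n) F) = η)
    (g : Matrix.GeneralLinearGroup (Fin n) F) :
    (∃ h ∈ GU, Matrix.det (↑h : Matrix (Fin n) (Fin n) F) = 1 ∧ h * g * h⁻¹ = g⁻¹) ↔
      ∃ h ∈ GU, h * g * h⁻¹ = g⁻¹ ∧
        Odd (orderOf (Matrix.det (↑h : Matrix (Fin n) (Fin n) F))) := by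
  constructor
  · rintro ⟨h, hmem, hdet, hconj⟩
    exact ⟨h, hmem, hconj, by simp [hdet]⟩
  · rintro ⟨h, hmem, hconj, hord⟩
    have : Fact p.Prime := ⟨hp⟩
    have : CharP F p := charP_of_card_eq_prime_pow (f := k * 2) (by rw [hcard, hq, pow_mul])
    have hGU_eq : GU = GeneralLinearGroup.isometrySubmonoid (iterateFrobenius F p k) η := by
      ext h
      rw [hGU, SetLike.mem_coe, GeneralLinearGroup.mem_isometrySubmonoid, hq]
      rfl
    rw [hGU_eq] at hmem ⊢
    refine ⟨h ^ orderOf (det (h : Matrix (Fin n) (Fin n) F)), pow_mem hmem _, ?_,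
      conj_pow_eq_inv_of_odd hconj hord⟩
    rw [Units.val_pow_eq_pow_val, det_pow, pow_orderOf_eq_one]

/-- Reality criterion in `SU_n(q)` for odd prime power `q`: `g ∈ SU_n(q)` is real
in `SU_n(q)` iff some `h ∈ GU_n(q)` inverts `g` with `det h` of odd multiplicative
order. -/
theorem stmt_3 (p k q n : ℕ) (hp : p.Prime) (hk : 0 < k) (hq : q = p ^ k)
    (hodd : Odd q) (F : Type*) [Field F] [Fintype F]
    (hcard : Fintype.card F = q ^ 2)
    (η : Matrix (Fin n) (Fin n) F)
    (hη : (η.map fun x => x ^ q).transpose = η) (hηdet : IsUnit η.det)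
    (GU : Set (Matrix.GeneralLinearGroup (Fin n) F))
    (hGU : ∀ h : Matrix.GeneralLinearGroup (Fin n) F, h ∈ GU ↔
      ((↑h : Matrix (Fin n) (Fin n) F).map fun x => x ^ q).transpose * η *
        (↑h : Matrix (Fin n) (Fin n) F) = η)
    (g : Matrix.GeneralLinearGroup (Fin n) F) (hgGU : g ∈ GU)
    (hgdet : Matrix.det (↑g : Matrix (Fin n) (Fin n) F) = 1) :
    (∃ h ∈ GU, Matrix.det (↑h : Matrix (Fin n) (Fin n) F) = 1 ∧ h * g * h⁻¹ = g⁻¹) ↔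
      ∃ h ∈ GU, h * g * h⁻¹ = g⁻¹ ∧
        Odd (orderOf (Matrix.det (↑h : Matrix (Fin n) (Fin n) F))) :=
  stmt_3_general p k q n hp hq F hcard η GU hGU g
end

section
/- Let q ≡ 3 (mod 4) be a prime power and let β ∈ F_{q²}^× satisfy β^{q+1} = −1. Then the 2-part of the multiplicative order of β equals 2·(q+1)₂ = (q²−1)₂, where (m)₂ denotes the largest power of 2 dividing m. Consequently, for an even integer n = 2m, the element (−1)^m β^n has odd multiplicative order in F_{q²}^× if and only if (q+1)₂ divides m, i.e., if and only if (q²−1)₂ divides n. -/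
/-!
Since `β ^ (q + 1) = -1 ≠ 1` (the characteristic is odd) while `β ^ (2 (q + 1)) = 1`, the order
of `β` divides `2 (q + 1)` but not `q + 1`, so its 2-adic valuation is `ν₂(q + 1) + 1`; as
`q ≡ 3 (mod 4)`, `ν₂(q - 1) = 1` and this is also `ν₂(q² - 1)`. Next,
`(-1) ^ m β ^ (2m) = β ^ (2m · (q + 3) / 2)` with `(q + 3) / 2` odd, and a power `x ^ N` has odd
order exactly when `N` is divisible by the 2-part of the order of `x`.
-/

namespace Nat

theorem factorization_eq_succ_of_dvd_prime_mul {p d n : ℕ} (hp : p.Prime) (hd : d ≠ 0)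
    (hn : n ≠ 0) (hdvd : d ∣ p * n) (hndvd : ¬ d ∣ n) :
    d.factorization p = n.factorization p + 1 := by
  have hle : d.factorization ≤ p.factorization + n.factorization := by
    rw [← Nat.factorization_mul hp.ne_zero hn]
    exact (Nat.factorization_le_iff_dvd hd (mul_ne_zero hp.ne_zero hn)).2 hdvd
  have hle_p : d.factorization p ≤ n.factorization p + 1 := by
    simpa [hp.factorization, add_comm] using hle p
  refine le_antisymm hle_p (not_lt.1 fun hlt => hndvd ?_)
  refine (Nat.factorization_le_iff_dvd hd hn).1 fun r => ?_
  rcases eq_or_ne r p with rfl | hr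
  · omega
  · simpa [hp.factorization, Finsupp.single_apply, Ne.symm hr] using hle r

theorem not_prime_dvd_div_gcd_iff {p d : ℕ} (hp : p.Prime) (hd : d ≠ 0) (N : ℕ) :
    ¬ p ∣ d / d.gcd N ↔ p ^ d.factorization p ∣ N := by
  have hg : d.gcd N ≠ 0 := (Nat.gcd_pos_of_pos_left N (Nat.pos_of_ne_zero hd)).ne'
  have hgd : d.gcd N ∣ d := Nat.gcd_dvd_left d N
  have hquot : d / d.gcd N ≠ 0 := (Nat.div_pos (Nat.le_of_dvd (Nat.pos_of_ne_zero hd) hgd)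
    (Nat.pos_of_ne_zero hg)).ne'
  calc ¬ p ∣ d / d.gcd N
      ↔ (d / d.gcd N).factorization p = 0 := by
        simp [Nat.factorization_eq_zero_iff, hp, hquot]
    _ ↔ d.factorization p ≤ (d.gcd N).factorization p := by
        rw [Nat.factorization_div hgd, Finsupp.tsub_apply, Nat.sub_eq_zero_iff_le]
    _ ↔ p ^ d.factorization p ∣ d.gcd N := (hp.pow_dvd_iff_le_factorization hg).symm
    _ ↔ p ^ d.factorization p ∣ N := by
        rw [Nat.dvd_gcd_iff, and_iff_right (Nat.ordProj_dvd d p)]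

theorem factorization_two_sq_sub_one {q : ℕ} (hq : q % 4 = 3) :
    (q ^ 2 - 1).factorization 2 = (q + 1).factorization 2 + 1 := by
  have hsplit : q ^ 2 - 1 = (q + 1) * (2 * ((q - 1) / 2)) := by
    rw [← one_pow 2, Nat.sq_sub_sq, one_pow]
    congr 1
    omega
  have hodd : ¬ 2 ∣ (q - 1) / 2 := by omega
  rw [hsplit, Nat.factorization_mul (by omega) (by omega),
    Nat.factorization_mul two_ne_zero (by omega), Nat.prime_two.factorization,
    Finsupp.add_apply, Finsupp.add_apply, Nat.factorization_eq_zero_of_not_dvd hodd]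
  simp

end Nat

section Monoid

variable {G : Type*} [Monoid G] {x : G}

theorem orderOf_factorization_eq_succ {p n : ℕ} (hp : p.Prime) (hn : n ≠ 0)
    (h_one : x ^ (p * n) = 1) (h_ne : x ^ n ≠ 1) :
    (orderOf x).factorization p = n.factorization p + 1 :=
  Nat.factorization_eq_succ_of_dvd_prime_mul hp
    (orderOf_eq_zero_iff'.not.2 fun h => h _ (mul_pos hp.pos (Nat.pos_of_ne_zero hn)) h_one)
    hn (orderOf_dvd_of_pow_eq_one h_one) (fun h => h_ne (orderOf_dvd_iff_pow_eq_one.1 h))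

theorem IsOfFinOrder.odd_orderOf_pow_iff (hx : IsOfFinOrder x) (N : ℕ) :
    Odd (orderOf (x ^ N)) ↔ 2 ^ (orderOf x).factorization 2 ∣ N := by
  rw [hx.orderOf_pow, ← Nat.not_even_iff_odd, even_iff_two_dvd]
  exact Nat.not_prime_dvd_div_gcd_iff Nat.prime_two hx.orderOf_pos.ne' N

end Monoid

theorem stmt_6_general (q : ℕ)
    (h3 : q % 4 = 3) (F : Type*) [Field F] [Fintype F]
    (hcard : Fintype.card F = q ^ 2) (β : F) (hβ : β ^ (q + 1) = -1) :
    2 ^ ((orderOf β).factorization 2) = 2 * 2 ^ ((q + 1).factorization 2) ∧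
    2 ^ ((orderOf β).factorization 2) = 2 ^ ((q ^ 2 - 1).factorization 2) ∧
    ∀ m : ℕ,
      (Odd (orderOf ((-1 : F) ^ m * β ^ (2 * m))) ↔
        2 ^ ((q + 1).factorization 2) ∣ m) ∧
      (Odd (orderOf ((-1 : F) ^ m * β ^ (2 * m))) ↔
        2 ^ ((q ^ 2 - 1).factorization 2) ∣ 2 * m) := by
  have hchar : (-1 : F) ≠ 1 := Ring.neg_one_ne_one_of_char_ne_two fun h => by
    have hodd : q ^ 2 % 2 = 1 := Nat.odd_iff.1 (Nat.odd_iff.2 (by omega)).pow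
    have := FiniteField.even_card_iff_char_two.1 h
    omega
  have h_one : β ^ (2 * (q + 1)) = 1 := by rw [pow_mul', hβ, neg_one_sq]
  have hν : (orderOf β).factorization 2 = (q + 1).factorization 2 + 1 :=
    orderOf_factorization_eq_succ Nat.prime_two (by omega) h_one (hβ ▸ hchar)
  have hν' := Nat.factorization_two_sq_sub_one h3
  obtain ⟨c, hc⟩ : ∃ c, q = 2 * c + 1 := ⟨q / 2, by omega⟩
  have hc_odd : Odd (c + 2) := Nat.odd_iff.2 (by omega)
  have hpow (m : ℕ) : (-1 : F) ^ m * β ^ (2 * m) = β ^ (2 * m * (c + 2)) := by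
    rw [← hβ, ← pow_mul, ← pow_add, hc]
    ring_nf
  have hodd_iff (m : ℕ) : Odd (orderOf ((-1 : F) ^ m * β ^ (2 * m))) ↔
      2 ^ ((q + 1).factorization 2 + 1) ∣ 2 * m := by
    rw [hpow, (isOfFinOrder_iff_pow_eq_one.2 ⟨_, by omega, h_one⟩).odd_orderOf_pow_iff, hν]
    exact (Nat.Coprime.pow_left _ (Nat.coprime_two_left.2 hc_odd)).dvd_mul_right
  refine ⟨by rw [hν, pow_succ'], by rw [hν, hν'], fun m => ⟨?_, ?_⟩⟩
  · rw [hodd_iff, pow_succ', Nat.mul_dvd_mul_iff_left two_pos]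
  · rw [hodd_iff, hν']

/-- For `q ≡ 3 (mod 4)` a prime power, `F = F_{q²}`, and `β ∈ F^×` with
`β^{q+1} = −1`: the 2-part of the order of `β` is `2·(q+1)₂ = (q²−1)₂`, and
`(−1)^m β^{2m}` has odd order iff `(q+1)₂ ∣ m`, iff `(q²−1)₂ ∣ 2m`. -/
theorem stmt_6 (p k q : ℕ) (hp : p.Prime) (hk : 0 < k) (hq : q = p ^ k)
    (h3 : q % 4 = 3) (F : Type*) [Field F] [Fintype F]
    (hcard : Fintype.card F = q ^ 2) (β : F) (hβ : β ^ (q + 1) = -1) :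
    2 ^ ((orderOf β).factorization 2) = 2 * 2 ^ ((q + 1).factorization 2) ∧
    2 ^ ((orderOf β).factorization 2) = 2 ^ ((q ^ 2 - 1).factorization 2) ∧
    ∀ m : ℕ,
      (Odd (orderOf ((-1 : F) ^ m * β ^ (2 * m))) ↔
        2 ^ ((q + 1).factorization 2) ∣ m) ∧
      (Odd (orderOf ((-1 : F) ^ m * β ^ (2 * m))) ↔
        2 ^ ((q ^ 2 - 1).factorization 2) ∣ 2 * m) :=
  stmt_6_general q h3 F hcard β hβ
end

section
/- Let q be an odd prime power, n = 2m even, and let GU_n(q) be defined with respect to the Hermitian form given by the antidiagonal matrix η_n (ones on the antidiagonal). Let u ∈ GU_n(q) be an upper unitriangular regular unipotent element (all superdiagonal entries nonzero). Then any h ∈ GU_n(q) with h u h⁻¹ = u⁻¹ is upper triangular with diagonal (β, −β, β, −β, ..., β, −β) for some β ∈ F_{q²}^× satisfying β^{q+1} = −1, and det(h) = (−1)^m β^n. -/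
/-!
Since `h u h⁻¹ = u⁻¹` is equivalent to `u h u = h`, one reads this identity entry by entry, from
the bottom row upwards and from left to right within a row. For `j < i` its entry `(i, j + 1)`
reduces to `h i j * u j (j + 1) = 0`, so `h` is upper triangular because the superdiagonal of
`u` has no zeros; the entry `(i, i + 1)` then reduces to
`u i (i + 1) * (h i i + h (i + 1) (i + 1)) = 0`, so the diagonal alternates. The unitary
condition on `h` at the corner entry `(n - 1, 0)`, where the antidiagonal form meets the first
column of `h`, reads `h (n - 1) (n - 1) ^ q * h 0 0 = 1`, that is `β ^ (q + 1) = -1` for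
`β = h 0 0`. When `n = 0`, `β` is instead `a ^ ((q - 1) / 2)` for a nonsquare `a`, by Euler's
criterion.
-/

open Finset

theorem FiniteField.exists_pow_add_one_eq_neg_one {F : Type*} [Field F] [Fintype F] {q : ℕ}
    (hq : Odd q) (hcard : Fintype.card F = q ^ 2) : ∃ β : F, β ^ (q + 1) = -1 := by
  have hF : ringChar F ≠ 2 := by
    rw [Ne, FiniteField.even_card_iff_char_two, hcard, ← Nat.even_iff, Nat.not_even_iff_odd]
    exact hq.pow
  obtain ⟨a, ha⟩ := FiniteField.exists_nonsquare hF
  have ha0 : a ≠ 0 := by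
    rintro rfl
    exact ha IsSquare.zero
  obtain ⟨k, rfl⟩ := hq
  have hhalf : Fintype.card F / 2 = k * (2 * k + 1 + 1) := by
    rw [hcard, show (2 * k + 1) ^ 2 = 2 * (k * (2 * k + 1 + 1)) + 1 by ring]
    omega
  refine ⟨a ^ k, ?_⟩
  rw [← pow_mul, ← hhalf]
  exact (FiniteField.pow_dichotomy hF ha0).resolve_left
    fun h => ha ((FiniteField.isSquare_iff hF ha0).mpr h)

theorem Finset.prod_range_two_mul_neg_one_pow_mul {R : Type*} [CommRing R] (β : R) (m : ℕ) :
    ∏ i ∈ range (2 * m), ((-1) ^ i * β) = (-1) ^ m * β ^ (2 * m) := by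
  induction m with
  | zero => simp
  | succ m ih =>
    rw [show 2 * (m + 1) = 2 * m + 1 + 1 by ring, prod_range_succ, prod_range_succ, ih,
      pow_succ (-1 : R) (2 * m), pow_mul (-1 : R) 2 m, neg_one_sq, one_pow]
    ring

namespace Matrix

section Semiring

variable {R : Type*} [Semiring R]

theorem unitriangular_mul_apply_of_forall_gt {ι : Type*} [Fintype ι] [LinearOrder ι]
    {U A : Matrix ι ι R} (hU : U.IsUpperTriangular) (hU1 : ∀ i, U i i = 1) {i k : ι}
    (hA : ∀ l, i < l → A l k = 0) : (U * A) i k = A i k := by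
  rw [mul_apply, Fintype.sum_eq_single i, hU1, one_mul]
  intro l hli
  rcases hli.lt_or_gt with h | h
  · rw [hU h, zero_mul]
  · rw [hA l h, mul_zero]

variable {n : ℕ} {U : Matrix (Fin (n + 1)) (Fin (n + 1)) R}

theorem unitriangular_mul_apply_castSucc {A : Matrix (Fin (n + 1)) (Fin (n + 1)) R}
    (hU : U.IsUpperTriangular) (hU1 : ∀ i, U i i = 1) {j : Fin n} {k : Fin (n + 1)}
    (hA : ∀ l, j.succ < l → A l k = 0) :
    (U * A) j.castSucc k = A j.castSucc k + U j.castSucc j.succ * A j.succ k := by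
  rw [mul_apply, Fintype.sum_eq_add _ _ (Fin.castSucc_lt_succ : j.castSucc < j.succ).ne, hU1,
    one_mul]
  rintro l ⟨hl, hl'⟩
  rcases hl.lt_or_gt with h | h
  · rw [show U j.castSucc l = 0 from hU h, zero_mul]
  · rw [hA l (lt_of_le_of_ne (Fin.castSucc_lt_iff_succ_le.mp h) (Ne.symm hl')), mul_zero]

theorem mul_unitriangular_apply_succ {B : Matrix (Fin (n + 1)) (Fin (n + 1)) R}
    (hU : U.IsUpperTriangular) (hU1 : ∀ i, U i i = 1) {i : Fin (n + 1)} {j : Fin n}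
    (hB : ∀ k < j.castSucc, B i k = 0) :
    (B * U) i j.succ = B i j.castSucc * U j.castSucc j.succ + B i j.succ := by
  rw [mul_apply, Fintype.sum_eq_add _ _ (Fin.castSucc_lt_succ : j.castSucc < j.succ).ne, hU1,
    mul_one]
  rintro k ⟨hk, hk'⟩
  rcases hk.lt_or_gt with h | h
  · rw [hB k h, zero_mul]
  · have hjk : j.succ < k := lt_of_le_of_ne (Fin.castSucc_lt_iff_succ_le.mp h) (Ne.symm hk')
    rw [show U k j.succ = 0 from hU hjk, mul_zero]

theorem transpose_mul_antidiag_mul_apply_zero {M η A : Matrix (Fin (n + 1)) (Fin (n + 1)) R}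
    (hη : ∀ i j : Fin (n + 1), η i j = if (i : ℕ) + (j : ℕ) = n then 1 else 0)
    (hA : A.IsUpperTriangular) (a : Fin (n + 1)) :
    (Mᵀ * η * A) a 0 = M (Fin.last n) a * A 0 0 := by
  rw [mul_apply, Fintype.sum_eq_single 0, mul_apply, Fintype.sum_eq_single (Fin.last n)]
  · simp [hη]
  · intro k hk
    rw [hη, if_neg (by simpa [Fin.ext_iff] using hk), mul_zero]
  · intro l hl
    rw [hA (Fin.pos_of_ne_zero hl), mul_zero]

end Semiring

section Reversal

variable {R : Type*} [CommRing R] [NoZeroDivisors R] {n : ℕ}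
  {U A : Matrix (Fin (n + 1)) (Fin (n + 1)) R}

theorem isUpperTriangular_of_mul_mul_eq (hU : U.IsUpperTriangular) (hU1 : ∀ i, U i i = 1)
    (hsup : ∀ j : Fin n, U j.castSucc j.succ ≠ 0) (hE : U * A * U = A) :
    A.IsUpperTriangular := by
  intro i
  induction i using WellFoundedGT.induction with
  | _ i ihi =>
  intro j
  induction j using WellFoundedLT.induction with
  | _ j ihj =>
  intro hji
  obtain ⟨j, rfl⟩ := Fin.exists_castSucc_eq.mpr (hji.trans_le (Fin.le_last i)).ne
  have hUA : ∀ k ≤ i, (U * A) i k = A i k := fun k hk =>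
    unitriangular_mul_apply_of_forall_gt hU hU1 fun l hl => ihi l hl (hk.trans_lt hl)
  have key := mul_unitriangular_apply_succ hU hU1 (B := U * A) (i := i) (j := j)
    fun k hk => (hUA k (hk.trans hji).le).trans (ihj k hk (hk.trans hji))
  rw [hE, hUA j.castSucc hji.le, hUA j.succ (Fin.castSucc_lt_iff_succ_le.mp hji)] at key
  exact (mul_eq_zero.mp (by linear_combination -key)).resolve_right (hsup j)

theorem diag_succ_eq_neg_of_mul_mul_eq (hU : U.IsUpperTriangular) (hU1 : ∀ i, U i i = 1)
    (hsup : ∀ j : Fin n, U j.castSucc j.succ ≠ 0) (hE : U * A * U = A)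
    (hA : A.IsUpperTriangular) (j : Fin n) :
    A j.succ j.succ = -A j.castSucc j.castSucc := by
  have key := mul_unitriangular_apply_succ hU hU1 (B := U * A) (i := j.castSucc) (j := j)
    fun k hk => hU.mul hA hk
  rw [hE, unitriangular_mul_apply_of_forall_gt hU hU1 (A := A) (i := j.castSucc)
      (k := j.castSucc) fun l hl => hA hl,
    unitriangular_mul_apply_castSucc hU hU1 (A := A) (j := j) (k := j.succ) fun l hl => hA hl]
    at key
  have hsum : U j.castSucc j.succ * (A j.castSucc j.castSucc + A j.succ j.succ) = 0 := by
    linear_combination -key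
  linear_combination (mul_eq_zero.mp hsum).resolve_left (hsup j)

theorem diag_eq_neg_one_pow_mul_of_mul_mul_eq (hU : U.IsUpperTriangular)
    (hU1 : ∀ i, U i i = 1) (hsup : ∀ j : Fin n, U j.castSucc j.succ ≠ 0) (hE : U * A * U = A)
    (hA : A.IsUpperTriangular) (i : Fin (n + 1)) :
    A i i = (-1) ^ (i : ℕ) * A 0 0 := by
  induction i using Fin.induction with
  | zero => simp
  | succ j ih =>
    rw [diag_succ_eq_neg_of_mul_mul_eq hU hU1 hsup hE hA, ih, Fin.val_succ, Fin.val_castSucc,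
      pow_succ]
    ring

end Reversal

end Matrix

theorem stmt_9_general (q m n : ℕ)
    (hodd : Odd q) (hn : n = 2 * m)
    (F : Type*) [Field F] [Fintype F] (hcard : Fintype.card F = q ^ 2)
    (η : Matrix (Fin n) (Fin n) F)
    (hη : ∀ i j : Fin n, η i j = if (i : ℕ) + (j : ℕ) = n - 1 then 1 else 0)
    (u h : Matrix.GeneralLinearGroup (Fin n) F)
    (hlow : ∀ i j : Fin n, (j : ℕ) < (i : ℕ) → (↑u : Matrix (Fin n) (Fin n) F) i j = 0)
    (hdiag : ∀ i : Fin n, (↑u : Matrix (Fin n) (Fin n) F) i i = 1)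
    (hsup : ∀ i j : Fin n, (i : ℕ) + 1 = (j : ℕ) →
      (↑u : Matrix (Fin n) (Fin n) F) i j ≠ 0)
    (hhGU : ((↑h : Matrix (Fin n) (Fin n) F).map fun x => x ^ q).transpose * η *
      (↑h : Matrix (Fin n) (Fin n) F) = η)
    (hrev : h * u * h⁻¹ = u⁻¹) :
    ∃ β : F, β ^ (q + 1) = -1 ∧
      (∀ i j : Fin n, (j : ℕ) < (i : ℕ) → (↑h : Matrix (Fin n) (Fin n) F) i j = 0) ∧
      (∀ i : Fin n, (↑h : Matrix (Fin n) (Fin n) F) i i = (-1 : F) ^ (i : ℕ) * β) ∧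
      Matrix.det (↑h : Matrix (Fin n) (Fin n) F) = (-1 : F) ^ m * β ^ n := by
  cases n with
  | zero =>
    obtain ⟨β, hβ⟩ := FiniteField.exists_pow_add_one_eq_neg_one hodd hcard
    exact ⟨β, hβ, fun i => i.elim0, fun i => i.elim0, by simp [show m = 0 by omega]⟩
  | succ k =>
  set U : Matrix (Fin (k + 1)) (Fin (k + 1)) F := ↑u
  set A : Matrix (Fin (k + 1)) (Fin (k + 1)) F := ↑h
  have hU : U.IsUpperTriangular := fun i j => hlow i j
  have hsup' : ∀ j : Fin k, U j.castSucc j.succ ≠ 0 := fun j => hsup _ _ rfl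
  have hE : U * A * U = A := by
    have huhu : u * h * u = h := calc
      u * h * u = u * (h * u * h⁻¹) * h := by group
      _ = h := by rw [hrev]; group
    exact congrArg Units.val huhu
  have hA := Matrix.isUpperTriangular_of_mul_mul_eq hU hdiag hsup' hE
  have hdiagA := Matrix.diag_eq_neg_one_pow_mul_of_mul_mul_eq hU hdiag hsup' hE hA
  set β := A 0 0
  refine ⟨β, ?_, hA, hdiagA, ?_⟩
  · have hη' : ∀ i j : Fin (k + 1), η i j = if (i : ℕ) + (j : ℕ) = k then 1 else 0 := by
      simpa using hη
    have hcorner := congrFun (congrFun hhGU (Fin.last k)) 0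
    rw [Matrix.transpose_mul_antidiag_mul_apply_zero hη' hA,
      Matrix.map_apply, hdiagA, hη'] at hcorner
    have hk : Odd k := ⟨m - 1, by omega⟩
    simp only [Fin.val_last, hk.neg_one_pow, Fin.val_zero, add_zero, if_true, neg_one_mul,
      hodd.neg_pow] at hcorner
    linear_combination -hcorner
  · rw [Matrix.det_of_isUpperTriangular hA, Finset.prod_congr rfl fun i _ => hdiagA i,
      Fin.prod_univ_eq_prod_range (fun i => (-1) ^ i * β), hn,
      Finset.prod_range_two_mul_neg_one_pow_mul]

/-- Reversing elements of a regular unipotent element of `GU_n(q)` (with respect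
to the antidiagonal Hermitian form), `q` odd, `n = 2m`: any `h ∈ GU_n(q)` with
`h u h⁻¹ = u⁻¹` is upper triangular with diagonal `(β, −β, …, β, −β)` where
`β^{q+1} = −1`, and `det h = (−1)^m β^n`. -/
theorem stmt_9 (p e q m n : ℕ) (hp : p.Prime) (he : 0 < e) (hq : q = p ^ e)
    (hodd : Odd q) (hn : n = 2 * m)
    (F : Type*) [Field F] [Fintype F] (hcard : Fintype.card F = q ^ 2)
    (η : Matrix (Fin n) (Fin n) F)
    (hη : ∀ i j : Fin n, η i j = if (i : ℕ) + (j : ℕ) = n - 1 then 1 else 0)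
    (u h : Matrix.GeneralLinearGroup (Fin n) F)
    (huGU : ((↑u : Matrix (Fin n) (Fin n) F).map fun x => x ^ q).transpose * η *
      (↑u : Matrix (Fin n) (Fin n) F) = η)
    (hlow : ∀ i j : Fin n, (j : ℕ) < (i : ℕ) → (↑u : Matrix (Fin n) (Fin n) F) i j = 0)
    (hdiag : ∀ i : Fin n, (↑u : Matrix (Fin n) (Fin n) F) i i = 1)
    (hsup : ∀ i j : Fin n, (i : ℕ) + 1 = (j : ℕ) →
      (↑u : Matrix (Fin n) (Fin n) F) i j ≠ 0)
    (hhGU : ((↑h : Matrix (Fin n) (Fin n) F).map fun x => x ^ q).transpose * η *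
      (↑h : Matrix (Fin n) (Fin n) F) = η)
    (hrev : h * u * h⁻¹ = u⁻¹) :
    ∃ β : F, β ^ (q + 1) = -1 ∧
      (∀ i j : Fin n, (j : ℕ) < (i : ℕ) → (↑h : Matrix (Fin n) (Fin n) F) i j = 0) ∧
      (∀ i : Fin n, (↑h : Matrix (Fin n) (Fin n) F) i i = (-1 : F) ^ (i : ℕ) * β) ∧
      Matrix.det (↑h : Matrix (Fin n) (Fin n) F) = (-1 : F) ^ m * β ^ n :=
  stmt_9_general q m n hodd hn F hcard η hη u h hlow hdiag hsup hhGU hrev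
end

section
/- Let q be any prime power, n ≥ 1, and let u ∈ GL_n(F_q) be a unipotent upper unitriangular matrix with all superdiagonal entries nonzero (a regular unipotent element). Then any h ∈ GL_n(F_q) satisfying h u h⁻¹ = u⁻¹ is upper triangular, and its diagonal entries alternate in sign: they are of the form (β, −β, β, −β, ...) for some β ∈ F_q^×. -/
/-!
Write `N = u - 1` and `M = u⁻¹ - 1`. Both are strictly upper triangular with nonzero
superdiagonal (that of `M` is `-N`'s), and `h N = M h`, hence `h Nᵏ = Mᵏ h`. Since `N^(j+1)`
kills the `j`-th basis vector, `M^(j+1)` kills the `j`-th column of `h`; but the kernel of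
`M^(j+1)` consists of vectors supported on the first `j + 1` coordinates, because `Mᵏ` has
nonzero entries on its `k`-th superdiagonal. So `h` is upper triangular. Comparing the
superdiagonal entries of `h N = M h` then gives `h_{i+1,i+1} = -h_{i,i}`, and the diagonal is
nonzero because `det h ≠ 0`.
-/

namespace Matrix

variable {R : Type*} {n : ℕ}

def VanishesBelowSuperdiag [Zero R] (A : Matrix (Fin n) (Fin n) R) (p : ℕ) : Prop :=
  ∀ i j : Fin n, (j : ℕ) < i + p → A i j = 0

theorem vanishesBelowSuperdiag_zero_iff [Zero R] {A : Matrix (Fin n) (Fin n) R} :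
    A.VanishesBelowSuperdiag 0 ↔ A.IsUpperTriangular :=
  ⟨fun h _ _ hij => h _ _ hij, fun h _ _ hij => h hij⟩

section Semiring

variable [Semiring R] {A B : Matrix (Fin n) (Fin n) R} {p q : ℕ}

theorem VanishesBelowSuperdiag.mul (hA : A.VanishesBelowSuperdiag p)
    (hB : B.VanishesBelowSuperdiag q) : (A * B).VanishesBelowSuperdiag (p + q) := by
  intro i j hij
  rw [mul_apply]
  refine Finset.sum_eq_zero fun l _ => ?_
  by_cases hl : (l : ℕ) < i + p
  · rw [hA i l hl, zero_mul]
  · rw [hB l j (by omega), mul_zero]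

theorem VanishesBelowSuperdiag.mul_apply (hA : A.VanishesBelowSuperdiag p)
    (hB : B.VanishesBelowSuperdiag q) {i l j : Fin n} (hl : (l : ℕ) = i + p)
    (hj : (j : ℕ) = l + q) : (A * B) i j = A i l * B l j := by
  rw [Matrix.mul_apply]
  refine Finset.sum_eq_single l (fun x _ hx => ?_) (by simp)
  rcases lt_or_gt_of_ne (Fin.val_ne_of_ne hx) with hx | hx
  · rw [hA i x (by omega), zero_mul]
  · rw [hB x j (by omega), mul_zero]

theorem VanishesBelowSuperdiag.pow (hA : A.VanishesBelowSuperdiag p) (k : ℕ) :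
    (A ^ k).VanishesBelowSuperdiag (k * p) := by
  induction k with
  | zero =>
    intro i j hij
    exact one_apply_ne (by rintro rfl; omega)
  | succ k ih => simpa [pow_succ, Nat.succ_mul] using ih.mul hA

theorem pow_apply_ne_zero [NoZeroDivisors R] [Nontrivial R] (hA : A.VanishesBelowSuperdiag 1)
    (hsup : ∀ i j : Fin n, (j : ℕ) = i + 1 → A i j ≠ 0) (k : ℕ) {i j : Fin n}
    (hij : (j : ℕ) = i + k) : (A ^ k) i j ≠ 0 := by
  induction k generalizing j with
  | zero =>
    obtain rfl : i = j := Fin.ext hij.symm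
    simp
  | succ k ih =>
    have hAk : (A ^ k).VanishesBelowSuperdiag k := by simpa using hA.pow k
    let l : Fin n := ⟨i + k, by omega⟩
    rw [pow_succ, hAk.mul_apply hA (l := l) rfl (by simp [l]; omega)]
    exact mul_ne_zero (ih rfl) (hsup l j (by simp [l]; omega))

theorem eq_zero_of_pow_mulVec_eq_zero [NoZeroDivisors R] [Nontrivial R]
    (hA : A.VanishesBelowSuperdiag 1)
    (hsup : ∀ i j : Fin n, (j : ℕ) = i + 1 → A i j ≠ 0) {k : ℕ} {v : Fin n → R}
    (hv : A ^ k *ᵥ v = 0) (m : Fin n) (hm : k ≤ m) : v m = 0 := by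
  induction m using WellFoundedGT.induction with
  | _ m ih =>
  let i : Fin n := ⟨m - k, by omega⟩
  have hAk : (A ^ k).VanishesBelowSuperdiag k := by simpa using hA.pow k
  have hvi : (A ^ k *ᵥ v) i = (A ^ k) i m * v m := by
    rw [mulVec, dotProduct]
    refine Finset.sum_eq_single m (fun l _ hl => ?_) (by simp)
    rcases lt_or_gt_of_ne hl with hl | hl
    · rw [hAk i l (by simp [i]; omega), zero_mul]
    · rw [ih l hl (by omega), mul_zero]
  rw [hv, Pi.zero_apply, eq_comm] at hvi
  exact (mul_eq_zero.mp hvi).resolve_left (pow_apply_ne_zero hA hsup k (by simp [i]; omega))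

theorem vanishesBelowSuperdiag_zero_of_semiconjBy [NoZeroDivisors R] [Nontrivial R]
    {H N M : Matrix (Fin n) (Fin n) R} (hN : N.VanishesBelowSuperdiag 1)
    (hM : M.VanishesBelowSuperdiag 1) (hMsup : ∀ i j : Fin n, (j : ℕ) = i + 1 → M i j ≠ 0)
    (hHNM : SemiconjBy H N M) : H.VanishesBelowSuperdiag 0 := by
  intro m j hjm
  have hcol : M ^ (j + 1 : ℕ) *ᵥ (fun l => H l j) = 0 := by
    ext i
    change (M ^ (j + 1 : ℕ) * H) i j = 0
    rw [← (hHNM.pow_right _).eq, mul_apply]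
    exact Finset.sum_eq_zero fun l _ => by rw [hN.pow _ l j (by omega), mul_zero]
  exact eq_zero_of_pow_mulVec_eq_zero hM hMsup hcol m (by omega)

end Semiring

theorem vanishesBelowSuperdiag_sub_one_iff [Ring R] {U : Matrix (Fin n) (Fin n) R} :
    (U - 1).VanishesBelowSuperdiag 1 ↔ U.VanishesBelowSuperdiag 0 ∧ ∀ i, U i i = 1 := by
  refine ⟨fun h => ⟨fun i j hij => ?_, fun i => ?_⟩, fun ⟨h0, h1⟩ i j hij => ?_⟩
  · simpa [one_apply_ne (Fin.ne_of_lt hij).symm] using h i j (by omega)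
  · simpa [sub_eq_zero] using h i i (by omega)
  · rcases (Nat.lt_succ_iff.mp hij).lt_or_eq with hij | hij
    · simp [h0 i j hij, one_apply_ne (Fin.ne_of_lt hij).symm]
    · obtain rfl := Fin.ext hij
      simp [h1]

theorem VanishesBelowSuperdiag.inv_sub_one [CommRing R] {U V : Matrix (Fin n) (Fin n) R}
    (hU : (U - 1).VanishesBelowSuperdiag 1) (hVU : V * U = 1) :
    (V - 1).VanishesBelowSuperdiag 1 ∧
      ∀ i j : Fin n, (j : ℕ) = i + 1 → (V - 1) i j = -(U - 1) i j := by
  obtain ⟨hU0, hUdiag⟩ := vanishesBelowSuperdiag_sub_one_iff.mp hU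
  have hV0 : V.VanishesBelowSuperdiag 0 := by
    have := invertibleOfLeftInverse U V hVU
    rw [vanishesBelowSuperdiag_zero_iff] at hU0 ⊢
    simpa [inv_eq_left_inv hVU] using blockTriangular_inv_of_blockTriangular hU0
  have hVdiag (i : Fin n) : V i i = 1 := by
    simpa [hUdiag, hVU] using (hV0.mul_apply hU0 (i := i) rfl rfl).symm
  have hVsub : V - 1 = -(V * (U - 1)) := by rw [mul_sub, hVU, mul_one, neg_sub]
  rw [hVsub]
  refine ⟨fun i j hij => ?_, fun i j hij => ?_⟩
  · rw [neg_apply, (hV0.mul hU) i j (by omega), neg_zero]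
  · rw [neg_apply, hV0.mul_apply hU rfl hij, hVdiag, one_mul]

end Matrix

theorem Fin.eq_neg_one_pow_mul_of_succ_eq_neg {R : Type*} [Ring R] {m : ℕ} {f : Fin (m + 1) → R}
    (hf : ∀ i : Fin m, f i.succ = -f i.castSucc) (i : Fin (m + 1)) :
    f i = (-1) ^ (i : ℕ) * f 0 := by
  induction i using Fin.induction with
  | zero => simp
  | succ i ih => rw [hf, ih, val_succ, val_castSucc, pow_succ, mul_neg_one, neg_mul]

open Matrix

/-- Any element inverting a regular unipotent upper unitriangular matrix is upper
triangular with alternating diagonal `(β, −β, β, −β, …)`. -/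
theorem stmt_10 {F : Type*} [Field F] (n : ℕ)
    (u h : Matrix.GeneralLinearGroup (Fin n) F)
    (hlow : ∀ i j : Fin n, (j : ℕ) < (i : ℕ) → (↑u : Matrix (Fin n) (Fin n) F) i j = 0)
    (hdiag : ∀ i : Fin n, (↑u : Matrix (Fin n) (Fin n) F) i i = 1)
    (hsup : ∀ i j : Fin n, (i : ℕ) + 1 = (j : ℕ) →
      (↑u : Matrix (Fin n) (Fin n) F) i j ≠ 0)
    (hrev : h * u * h⁻¹ = u⁻¹) :
    (∀ i j : Fin n, (j : ℕ) < (i : ℕ) → (↑h : Matrix (Fin n) (Fin n) F) i j = 0) ∧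
    ∃ β : F, β ≠ 0 ∧
      ∀ i : Fin n, (↑h : Matrix (Fin n) (Fin n) F) i i = (-1 : F) ^ (i : ℕ) * β := by
  set H : Matrix (Fin n) (Fin n) F := ↑h
  set U : Matrix (Fin n) (Fin n) F := ↑u
  set V : Matrix (Fin n) (Fin n) F := ↑u⁻¹
  set N := U - 1
  set M := V - 1
  have hN : N.VanishesBelowSuperdiag 1 := vanishesBelowSuperdiag_sub_one_iff.mpr ⟨hlow, hdiag⟩
  have hNsup (i j : Fin n) (hij : (j : ℕ) = i + 1) : N i j ≠ 0 := by
    simpa [N, one_apply_ne (Fin.ne_of_lt (show i < j by omega))] using hsup i j hij.symm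
  obtain ⟨hM, hMN⟩ : M.VanishesBelowSuperdiag 1 ∧
      ∀ i j : Fin n, (j : ℕ) = i + 1 → M i j = -N i j := hN.inv_sub_one u.inv_mul
  have hconj : SemiconjBy H N M := by
    have hHU : H * U = V * H := by
      simpa only [Units.val_mul] using congrArg Units.val (mul_inv_eq_iff_eq_mul.mp hrev)
    simp only [SemiconjBy, N, M, mul_sub, sub_mul, hHU, mul_one, one_mul]
  have hH := vanishesBelowSuperdiag_zero_of_semiconjBy hN hM
    (fun i j hij => hMN i j hij ▸ neg_ne_zero.mpr (hNsup i j hij)) hconj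
  refine ⟨hH, ?_⟩
  have hstep (i j : Fin n) (hij : (j : ℕ) = i + 1) : H j j = -H i i := by
    have : H i i * N i j = M i j * H j j := by
      rw [← hH.mul_apply hN rfl hij, hconj.eq, hM.mul_apply hH hij rfl]
    rw [hMN i j hij] at this
    exact mul_left_cancel₀ (hNsup i j hij) (by linear_combination this)
  rcases n with _ | m
  · exact ⟨1, one_ne_zero, fun i => i.elim0⟩
  have hdet : ∏ i, H i i ≠ 0 := det_of_isUpperTriangular hH ▸ h.det_ne_zero
  exact ⟨H 0 0, Finset.prod_ne_zero_iff.mp hdet 0 (Finset.mem_univ _),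
    Fin.eq_neg_one_pow_mul_of_succ_eq_neg (f := fun i => H i i) fun i => hstep _ _ (by simp)⟩
end
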